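/- arXiv:1907.04586 — 4 statements merged into one kernel-verified Lean document; each statement's English description precedes it below -/
import Mathlib

section
/- Let G be a chordal graph with a BFS-layering (V_0, V_1, …) and let i > 0. If C is a connected subgraph of the graph induced on the union of layers V_j with j > i, then the shadow S_i(C), defined as the set of vertices v ∈ V_i such that there is a path P from v to C with P ∩ V_i = {v}, induces a clique in G. -/
/-- A graph is chordal if every cycle of length at least 4 has a chord: two vertices of the
cycle that are adjacent in the graph by an edge not belonging to the cycle. -/
def IsChordal {V : Type*} (G : SimpleGraph V) : Prop :=
  ∀ ⦃u : V⦄ (w : G.Walk u u), w.IsCycle → 4 ≤ w.length →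
    ∃ x y : V, x ∈ w.support ∧ y ∈ w.support ∧ G.Adj x y ∧ s(x, y) ∉ w.edges

/-- With respect to the BFS-layering of `G` rooted at `r` (layer `V_i` is the set of vertices
at distance exactly `i` from `r`), the shadow `S_i(C)` of a subgraph `C` is the set of vertices
`v` in layer `i` admitting a path `P` from `v` to `C` whose only vertex in layer `i` is `v`. -/
def shadow {V : Type*} (G : SimpleGraph V) (r : V) (i : ℕ) (C : G.Subgraph) : Set V :=
  {v | G.dist r v = i ∧ ∃ c : V, c ∈ C.verts ∧ ∃ P : G.Walk v c,
    P.IsPath ∧ ∀ x ∈ P.support, G.dist r x = i → x = v}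

/-!
Let `u ≠ v` lie in the shadow. Joining their shadow paths through `C` gives a `u`–`v` walk whose
inner vertices lie strictly above layer `i`; joining geodesics from the root gives one whose inner
vertices lie strictly below it. Adjacent vertices lie in equal or consecutive layers, so the two
sets of inner vertices are disjoint with no edge between them. Shortening both walks to chordless paths, if
`u` and `v` were non-adjacent the two paths would form a chordless cycle of length at least 4.
-/

namespace SimpleGraph

variable {V : Type*} {G : SimpleGraph V}

namespace Walk

variable {u v : V}

theorem exists_support_subset_length_lt_of_not_isChordless {p : G.Walk u v}
    (hp : ¬ p.IsChordless) : ∃ q : G.Walk u v, q.support ⊆ p.support ∧ q.length < p.length := by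
  rw [isChordless_iff_forall_mem_edges] at hp
  push Not at hp
  obtain ⟨x, y, hx, hy, hxy, hxyp⟩ := hp
  obtain ⟨i, rfl, hi⟩ := mem_support_iff_exists_getVert.mp hx
  obtain ⟨j, rfl, hj⟩ := mem_support_iff_exists_getVert.mp hy
  clear hx hy
  wlog hij : i < j generalizing i j
  · have hji : j < i := by
      rcases Nat.lt_trichotomy i j with h | rfl | h
      exacts [absurd h hij, absurd rfl hxy.ne, h]
    exact this j hj i hi hxy.symm (by rwa [Sym2.eq_swap]) hji
  have hij2 : i + 2 ≤ j := by
    by_contra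
    obtain rfl : j = i + 1 := by omega
    exact hxyp ((mk_mem_edges_iff_exists p).mpr ⟨i, by omega, rfl⟩)
  -- skip the segment of `p` between positions `i` and `j` by using the chord
  refine ⟨(p.take i).append (cons hxy (p.drop j)), ?_, ?_⟩
  · intro z hz
    rw [mem_support_append_iff, support_cons, List.mem_cons] at hz
    rcases hz with hz | rfl | hz
    exacts [(p.isSubwalk_take i).support_subset hz, p.getVert_mem_support i,
      (p.isSubwalk_drop j).support_subset hz]
  · simp only [length_append, length_cons, take_length, drop_length]
    omega

theorem exists_isPath_isChordless_support_subset [DecidableEq V] (p : G.Walk u v) :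
    ∃ q : G.Walk u v, q.IsPath ∧ q.IsChordless ∧ q.support ⊆ p.support := by
  induction hn : p.length using Nat.strong_induction_on generalizing p with
  | _ n ih =>
  by_cases hbyp : p.bypass.length < p.length
  · obtain ⟨q, hq, hqc, hqs⟩ := ih _ (hn ▸ hbyp) p.bypass rfl
    exact ⟨q, hq, hqc, List.Subset.trans hqs p.support_bypass_subset_support⟩
  by_cases hpc : p.IsChordless
  · refine ⟨p, ?_, hpc, List.Subset.refl _⟩
    rw [← p.bypass_eq_self_of_length_le_length_bypass (not_lt.mp hbyp)]
    exact p.bypass_isPath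
  · obtain ⟨p', hp's, hp'l⟩ := exists_support_subset_length_lt_of_not_isChordless hpc
    obtain ⟨q, hq, hqc, hqs⟩ := ih _ (hn ▸ hp'l) p' rfl
    exact ⟨q, hq, hqc, List.Subset.trans hqs hp's⟩

theorem IsPath.ne_start_of_mem_support_tail {p : G.Walk u v} (hp : p.IsPath) {z : V}
    (hz : z ∈ p.support.tail) : z ≠ u := by
  have := hp.support_nodup
  rw [← cons_tail_support, List.nodup_cons] at this
  exact fun h => this.1 (h ▸ hz)

theorem IsPath.isCycle_append_reverse {p q : G.Walk u v} (hp : p.IsPath) (hq : q.IsPath)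
    (hpq : ∀ z ∈ p.support, z ∈ q.support → z = u ∨ z = v) (hlen : 2 ≤ p.length) :
    (p.append q.reverse).IsCycle := by
  refine hp.isCycle_append hq.reverse (List.disjoint_left.mpr fun z hzp hzq => ?_) (Or.inl hlen)
  have hzq' : z ∈ q.support := by simpa using List.mem_of_mem_tail hzq
  rcases hpq z (List.mem_of_mem_tail hzp) hzq' with rfl | rfl
  exacts [hp.ne_start_of_mem_support_tail hzp rfl,
    hq.reverse.ne_start_of_mem_support_tail hzq rfl]

end Walk

variable {r : V} {i : ℕ}

theorem Walk.forall_lt_dist_of_forall_dist_ne {a b : V} (w : G.Walk a b)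
    (hw : ∀ z ∈ w.support, G.dist r z ≠ i) (hb : i < G.dist r b) :
    ∀ z ∈ w.support, i < G.dist r z := by
  induction w with
  | nil => simpa using hb
  | cons h w ih =>
    have ih := ih (fun z hz => hw z (List.mem_cons_of_mem _ hz)) hb
    have hstep := h.diff_dist_adj (u := r)
    have hnext := ih _ w.start_mem_support
    have hstart := hw _ (List.mem_cons_self ..)
    simp only [Walk.support_cons, List.mem_cons, forall_eq_or_imp]
    exact ⟨by omega, ih⟩

theorem Walk.IsPath.lt_dist_of_ne_start {v c : V} {p : G.Walk v c} (hp : p.IsPath)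
    (hlayer : ∀ z ∈ p.support, G.dist r z = i → z = v) (hc : i < G.dist r c) :
    ∀ z ∈ p.support, z ≠ v → i < G.dist r z := by
  cases p with
  | nil => exact fun z hz hzv => absurd (by simpa using hz) hzv
  | cons h p =>
    rw [cons_isPath_iff] at hp
    have hp_avoid : ∀ z ∈ p.support, G.dist r z ≠ i := fun z hz hzi =>
      hp.2 (hlayer z (List.mem_cons_of_mem _ hz) hzi ▸ hz)
    simp only [Walk.support_cons, List.mem_cons, forall_eq_or_imp]
    exact ⟨fun h => (h rfl).elim,
      fun z hz _ => p.forall_lt_dist_of_forall_dist_ne hp_avoid hc z hz⟩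

theorem Walk.dist_lt_of_length_eq_dist {w : V} (p : G.Walk r w) (hp : p.length = G.dist r w) :
    ∀ z ∈ p.support, z ≠ w → G.dist r z < G.dist r w := by
  classical
  intro z hz hzw
  exact hp ▸ (dist_le (p.takeUntil z hz)).trans_lt (p.length_takeUntil_lt_length hz hzw)

end SimpleGraph

open SimpleGraph.Walk in
theorem IsChordal.adj_of_separated_walks {V : Type*} {G : SimpleGraph V} (hch : IsChordal G)
    {A B : Set V} (hAB : ∀ a ∈ A, ∀ b ∈ B, a ≠ b ∧ ¬ G.Adj a b) {u v : V} (huv : u ≠ v)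
    (p q : G.Walk u v) (hp : ∀ z ∈ p.support, z ≠ u → z ≠ v → z ∈ A)
    (hq : ∀ z ∈ q.support, z ≠ u → z ≠ v → z ∈ B) : G.Adj u v := by
  classical
  by_contra hnadj
  obtain ⟨p', hp', hp'c, hp's⟩ := p.exists_isPath_isChordless_support_subset
  obtain ⟨q', hq', hq'c, hq's⟩ := q.exists_isPath_isChordless_support_subset
  have hlen : ∀ w : G.Walk u v, 2 ≤ w.length := fun w => by
    by_contra! h
    interval_cases hw : w.length
    · exact huv (eq_of_length_eq_zero hw)
    · exact hnadj (adj_of_length_eq_one hw)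
  have hpA : ∀ z ∈ p'.support, z ∉ q'.support → z ∈ A := fun z hz hzq =>
    hp z (hp's hz) (fun h => hzq (h ▸ q'.start_mem_support)) (fun h => hzq (h ▸ q'.end_mem_support))
  have hqB : ∀ z ∈ q'.support, z ∉ p'.support → z ∈ B := fun z hz hzp =>
    hq z (hq's hz) (fun h => hzp (h ▸ p'.start_mem_support)) (fun h => hzp (h ▸ p'.end_mem_support))
  have hcyc : (p'.append q'.reverse).IsCycle := by
    refine hp'.isCycle_append_reverse hq' (fun z hzp hzq => ?_) (hlen p')
    by_contra! hz
    exact (hAB z (hp z (hp's hzp) hz.1 hz.2) z (hq z (hq's hzq) hz.1 hz.2)).1 rfl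
  obtain ⟨x, y, hx, hy, hxy, hxyc⟩ := hch _ hcyc (by
    rw [length_append, length_reverse]; linarith [hlen p', hlen q'])
  rw [edges_append, edges_reverse, List.mem_append, List.mem_reverse, not_or] at hxyc
  rw [mem_support_append_iff, support_reverse, List.mem_reverse] at hx hy
  have hcross : ∀ ⦃a b⦄, a ∈ p'.support → b ∈ q'.support → G.Adj a b →
      s(a, b) ∉ p'.edges → s(a, b) ∉ q'.edges → False := fun a b hap hbq hab habp habq => by
    by_cases haq : a ∈ q'.support
    · exact habq (hq'c.mem_edges haq hbq hab)
    by_cases hbp : b ∈ p'.support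
    · exact habp (hp'c.mem_edges hap hbp hab)
    exact (hAB a (hpA a hap haq) b (hqB b hbq hbp)).2 hab
  rcases hx with hxp | hxq <;> rcases hy with hyp | hyq
  · exact hxyc.1 (hp'c.mem_edges hxp hyp hxy)
  · exact hcross hxp hyq hxy hxyc.1 hxyc.2
  · exact hcross hyp hxq hxy.symm (Sym2.eq_swap ▸ hxyc.1) (Sym2.eq_swap ▸ hxyc.2)
  · exact hxyc.2 (hq'c.mem_edges hxq hyq hxy)

open SimpleGraph in
theorem shadow_isClique_general {V : Type*} (G : SimpleGraph V)
    (hG : G.Connected) (hch : IsChordal G) (r : V) (i : ℕ)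
    (C : G.Subgraph) (hC : C.Connected) (hCv : ∀ v ∈ C.verts, i < G.dist r v) :
    ∀ u ∈ shadow G r i C, ∀ v ∈ shadow G r i C, u ≠ v → G.Adj u v := by
  rintro u ⟨hu, cu, hcu, Pu, hPu, hPu_layer⟩ v ⟨hv, cv, hcv, Pv, hPv, hPv_layer⟩ huv
  obtain ⟨Wc, hWc⟩ :=
    (C.preconnected_iff_forall_exists_walk_subgraph.mp hC.preconnected) hcu hcv
  obtain ⟨Ru, hRu⟩ := hG.exists_walk_length_eq_dist r u
  obtain ⟨Rv, hRv⟩ := hG.exists_walk_length_eq_dist r v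
  have hlayers : ∀ a ∈ {z | i < G.dist r z}, ∀ b ∈ {z | G.dist r z < i},
      a ≠ b ∧ ¬ G.Adj a b := by
    intro a ha b hb
    simp only [Set.mem_ofPred_eq] at ha hb
    exact ⟨by rintro rfl; omega, fun hab => by have := hab.diff_dist_adj (u := r); omega⟩
  refine hch.adj_of_separated_walks hlayers huv
    (Pu.append (Wc.append Pv.reverse)) (Ru.reverse.append Rv) ?_ ?_
  · intro z hz hzu hzv
    simp only [Walk.mem_support_append_iff, Walk.support_reverse, List.mem_reverse] at hz
    rcases hz with hz | hz | hz
    · exact hPu.lt_dist_of_ne_start hPu_layer (hCv cu hcu) z hz hzu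
    · exact hCv z (Subgraph.verts_mono hWc (Wc.mem_verts_toSubgraph.mpr hz))
    · exact hPv.lt_dist_of_ne_start hPv_layer (hCv cv hcv) z hz hzv
  · intro z hz hzu hzv
    simp only [Walk.mem_support_append_iff, Walk.support_reverse, List.mem_reverse] at hz
    rcases hz with hz | hz
    · exact hu ▸ Ru.dist_lt_of_length_eq_dist hRu z hz hzu
    · exact hv ▸ Rv.dist_lt_of_length_eq_dist hRv z hz hzv

/-- In a connected chordal graph with BFS-layering `(V_0, V_1, …)` rooted at `r`, for `i > 0`,
the shadow in layer `i` of a connected subgraph `C` living in layers `> i` is a clique. -/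
theorem shadow_isClique {V : Type*} [Fintype V] (G : SimpleGraph V)
    (hG : G.Connected) (hch : IsChordal G) (r : V) (i : ℕ) (hi : 0 < i)
    (C : G.Subgraph) (hC : C.Connected) (hCv : ∀ v ∈ C.verts, i < G.dist r v) :
    ∀ u ∈ shadow G r i C, ∀ v ∈ shadow G r i C, u ≠ v → G.Adj u v :=
  shadow_isClique_general G hG hch r i C hC hCv
end

section
/- Let G be a maximal outerplanar graph with a BFS-layering (V_0, V_1, …). Then for every i ≥ 0 the induced subgraph G[V_i] is a linear forest, i.e., every connected component of G[V_i] is a path (equivalently, G[V_i] is a forest with maximum degree at most 2). -/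
/-- `H` is a minor of `G`: there are pairwise disjoint connected branch sets in `G`,
one for each vertex of `H`, with edges of `H` realized by edges of `G` between the
corresponding branch sets. -/
def IsMinorOf {W V : Type*} (H : SimpleGraph W) (G : SimpleGraph V) : Prop :=
  ∃ f : W → Set V,
    (∀ w : W, (G.induce (f w)).Connected) ∧
    (∀ w w' : W, w ≠ w' → Disjoint (f w) (f w')) ∧
    (∀ ⦃w w' : W⦄, H.Adj w w' → ∃ u ∈ f w, ∃ v ∈ f w', G.Adj u v)

/-- A graph is outerplanar iff it has no `K₄`-minor and no `K_{2,3}`-minor. -/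
def Outerplanar {V : Type*} (G : SimpleGraph V) : Prop :=
  ¬ IsMinorOf (SimpleGraph.completeGraph (Fin 4)) G ∧
  ¬ IsMinorOf (completeBipartiteGraph (Fin 2) (Fin 3)) G

/-!
Contract the ball `B = {u | dist r u ≤ n}` to a single vertex: `B` is connected, disjoint from
the layer `S = V_{n+1}`, and every vertex of `S` has a neighbour in `B`, so it becomes an apex
over `G[S]`. A cycle of `G[S]` is a `K₃`-minor (one vertex, its successor, and the rest of the
cycle), which together with the apex is a `K₄`-minor; a vertex of `S` with three neighbours in
`S` forms, together with the apex, a `K_{2,3}`-minor. The layer `V_0 = {r}` has no edges.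
-/

open SimpleGraph Function

lemma Set.nonempty_embedding_fin_of_le_ncard {α : Type*} {s : Set α} {n : ℕ} (h : n ≤ s.ncard) :
    Nonempty (Fin n ↪ s) := by
  rcases s.finite_or_infinite with hs | hs
  · have : Fintype s := hs.fintype
    exact Function.Embedding.nonempty_of_card_le
      (by simpa [← Nat.card_eq_fintype_card, Nat.card_fin] using h)
  · rw [hs.ncard, Nat.le_zero] at h
    subst h
    exact ⟨Function.Embedding.ofIsEmpty⟩

section Minors

variable {V W : Type*} {G : SimpleGraph V}

lemma isMinorOf_completeGraph_of_lt [LinearOrder W] (f : W → Set V)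
    (hconn : ∀ i, (G.induce (f i)).Connected)
    (hdisj : ∀ ⦃i j⦄, i < j → Disjoint (f i) (f j))
    (hadj : ∀ ⦃i j⦄, i < j → ∃ u ∈ f i, ∃ v ∈ f j, G.Adj u v) :
    IsMinorOf (completeGraph W) G := by
  refine ⟨f, hconn, fun i j hij => ?_, fun i j hij => ?_⟩
  · rcases hij.lt_or_gt with h | h
    exacts [hdisj h, (hdisj h).symm]
  · rcases (show i ≠ j from hij).lt_or_gt with h | h
    · exact hadj h
    · obtain ⟨u, hu, v, hv, huv⟩ := hadj h
      exact ⟨v, hv, u, hu, huv.symm⟩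

lemma isMinorOf_completeBipartiteGraph {α β : Type*} (f : α → Set V) (g : β → Set V)
    (hf : ∀ a, (G.induce (f a)).Connected) (hg : ∀ b, (G.induce (g b)).Connected)
    (hff : Pairwise (Disjoint on f)) (hgg : Pairwise (Disjoint on g))
    (hfg : ∀ a b, Disjoint (f a) (g b)) (hadj : ∀ a b, ∃ u ∈ f a, ∃ v ∈ g b, G.Adj u v) :
    IsMinorOf (completeBipartiteGraph α β) G := by
  refine ⟨Sum.elim f g, ?_, ?_, ?_⟩
  · rintro (a | b)
    exacts [hf a, hg b]
  · rintro (a | b) (a' | b') h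
    · exact hff (fun h' => h (congrArg _ h'))
    · exact hfg a b'
    · exact (hfg a' b).symm
    · exact hgg (fun h' => h (congrArg _ h'))
  · rintro (a | b) (a' | b') h
    · simp at h
    · exact hadj a b'
    · obtain ⟨u, hu, v, hv, huv⟩ := hadj a' b
      exact ⟨v, hv, u, hu, huv.symm⟩
    · simp at h

lemma SimpleGraph.Walk.IsCycle.isMinorOf_completeGraph_three {u : V} {p : G.Walk u u}
    (hp : p.IsCycle) : IsMinorOf (completeGraph (Fin 3)) G := by
  cases p with
  | nil => exact absurd rfl hp.ne_nil
  | @cons _ b _ hub q =>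
  obtain ⟨hq, hub_q⟩ := (Walk.cons_isCycle_iff q hub).mp hp
  cases q with
  | nil => exact absurd hub G.irrefl
  | @cons _ c _ hbc q' =>
  cases q' with
  | nil => simp at hub_q
  | cons hce q'' =>
  obtain ⟨d, r, hdu, hr⟩ := Walk.exists_cons_eq_concat hce q''
  rw [hr] at hq
  obtain ⟨hb_r, hu_r⟩ : b ∉ r.support ∧ u ∉ r.support := by
    have := hq.support_nodup
    simp only [Walk.support_cons, Walk.support_concat, List.nodup_cons, List.mem_append,
      List.nodup_append] at this
    grind
  refine isMinorOf_completeGraph_of_lt ![{u}, {b}, {x | x ∈ r.support}] ?_ ?_ ?_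
  · intro i
    fin_cases i
    exacts [by simp, by simp, r.connected_induce_support]
  · intro i j hij
    fin_cases i <;> fin_cases j <;> simp [hub.ne, hb_r, hu_r] at hij ⊢
  · intro i j hij
    fin_cases i <;> fin_cases j <;> simp at hij ⊢
    exacts [hub, ⟨d, r.end_mem_support, hdu.symm⟩, ⟨c, r.start_mem_support, hbc⟩]

lemma connected_induce_image_val {S : Set V} {X : Set S}
    (h : ((G.induce S).induce X).Connected) : (G.induce (Subtype.val '' X)).Connected :=
  h.map { toFun := fun x => ⟨x.1.1, x.1, x.2, rfl⟩, map_rel' := id }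
    (by rintro ⟨_, x, hx, rfl⟩; exact ⟨⟨x, hx⟩, rfl⟩)

/-- Contracting `B` yields a vertex adjacent to every vertex of `S`. -/
structure IsApexSet (G : SimpleGraph V) (B S : Set V) : Prop where
  connected : (G.induce B).Connected
  disjoint : Disjoint B S
  exists_adj : ∀ x ∈ S, ∃ u ∈ B, G.Adj u x

namespace IsApexSet

variable {B S : Set V}

lemma isMinorOf_completeGraph_succ {n : ℕ} (hB : IsApexSet G B S)
    (h : IsMinorOf (completeGraph (Fin n)) (G.induce S)) :
    IsMinorOf (completeGraph (Fin (n + 1))) G := by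
  obtain ⟨f, hconn, hdisj, hadj⟩ := h
  have himage (i : Fin n) : Subtype.val '' f i ⊆ S := by
    rintro _ ⟨x, -, rfl⟩; exact x.2
  refine isMinorOf_completeGraph_of_lt (Fin.cons B fun i => Subtype.val '' f i) ?_ ?_ ?_
  · intro i
    cases i using Fin.cases
    exacts [hB.connected, connected_induce_image_val (hconn _)]
  · intro i j hij
    obtain rfl | ⟨j, rfl⟩ := Fin.eq_zero_or_eq_succ j
    · exact absurd hij (Fin.not_lt_zero i)
    obtain rfl | ⟨i, rfl⟩ := Fin.eq_zero_or_eq_succ i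
    · exact hB.disjoint.mono_right (himage j)
    · exact Set.disjoint_image_of_injective Subtype.val_injective
        (hdisj i j (Fin.succ_lt_succ_iff.mp hij).ne)
  · intro i j hij
    obtain rfl | ⟨j, rfl⟩ := Fin.eq_zero_or_eq_succ j
    · exact absurd hij (Fin.not_lt_zero i)
    obtain rfl | ⟨i, rfl⟩ := Fin.eq_zero_or_eq_succ i
    · obtain ⟨⟨x, hx⟩⟩ := (hconn j).nonempty
      obtain ⟨u, hu, hux⟩ := hB.exists_adj x.1 x.2
      exact ⟨u, hu, x.1, ⟨x, hx, rfl⟩, hux⟩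
    · obtain ⟨u, hu, v, hv, huv⟩ := hadj (Fin.succ_lt_succ_iff.mp hij).ne
      exact ⟨u.1, ⟨u, hu, rfl⟩, v.1, ⟨v, hv, rfl⟩, huv⟩

lemma isMinorOf_completeBipartiteGraph_two {β : Type*} (hB : IsApexSet G B S) {v : S}
    (x : β ↪ (G.induce S).neighborSet v) : IsMinorOf (completeBipartiteGraph (Fin 2) β) G := by
  have hvx (j : β) : G.Adj v (x j) := (x j).2
  have hB_disj {y : V} (hy : y ∈ S) : Disjoint B {y} :=
    Set.disjoint_singleton_right.mpr fun h => hB.disjoint.notMem_of_mem_left h hy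
  refine isMinorOf_completeBipartiteGraph ![{v.1}, B] (fun j => {(x j).1.1})
    ?_ (fun _ => by simp) ?_ ?_ ?_ ?_
  · intro a
    fin_cases a
    exacts [by simp, hB.connected]
  · intro a a' h
    fin_cases a <;> fin_cases a'
    all_goals first | exact absurd rfl h | exact hB_disj v.2 | exact (hB_disj v.2).symm
  · intro j j' h
    simpa [Subtype.val_injective.eq_iff] using h
  · intro a j
    fin_cases a
    exacts [by simpa using (hvx j).ne, hB_disj (x j).1.2]
  · intro a j
    fin_cases a
    · exact ⟨v, rfl, _, rfl, hvx j⟩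
    · obtain ⟨u, hu, hux⟩ := hB.exists_adj _ (x j).1.2
      exact ⟨u, hu, _, rfl, hux⟩

lemma isAcyclic_induce (hB : IsApexSet G B S) (hK₄ : ¬ IsMinorOf (completeGraph (Fin 4)) G) :
    (G.induce S).IsAcyclic :=
  fun _ _ hp => hK₄ (hB.isMinorOf_completeGraph_succ hp.isMinorOf_completeGraph_three)

lemma ncard_neighborSet_induce_le_two (hB : IsApexSet G B S)
    (hK₂₃ : ¬ IsMinorOf (completeBipartiteGraph (Fin 2) (Fin 3)) G) (v : S) :
    ((G.induce S).neighborSet v).ncard ≤ 2 := by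
  by_contra! h
  obtain ⟨x⟩ := Set.nonempty_embedding_fin_of_le_ncard h
  exact hK₂₃ (hB.isMinorOf_completeBipartiteGraph_two x)

end IsApexSet

end Minors

section Layers

variable {V : Type*} {G : SimpleGraph V}

lemma SimpleGraph.Connected.exists_adj_dist_eq (hG : G.Connected) {r v : V} {n : ℕ}
    (h : G.dist r v = n + 1) : ∃ u, G.Adj u v ∧ G.dist r u = n := by
  obtain ⟨p, hp⟩ := hG.exists_walk_length_eq_dist r v
  have hp_nil : ¬ p.Nil := by simp [← Walk.length_eq_zero_iff, hp, h]
  refine ⟨p.penultimate, p.adj_penultimate hp_nil, le_antisymm ?_ ?_⟩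
  · calc G.dist r p.penultimate ≤ p.dropLast.length := dist_le _
      _ = n := by rw [Walk.length_dropLast, hp, h]; rfl
  · have : G.dist r v ≤ G.dist r p.penultimate + G.dist p.penultimate v := hG.dist_triangle
    rw [dist_eq_one_iff_adj.mpr (p.adj_penultimate hp_nil)] at this
    omega

lemma SimpleGraph.Connected.connected_induce_dist_le (hG : G.Connected) (r : V) (n : ℕ) :
    (G.induce {u | G.dist r u ≤ n}).Connected := by
  classical
  refine induce_connected_of_patches r (by simp) fun {v} hv => ?_
  obtain ⟨p, hp⟩ := hG.exists_walk_length_eq_dist r v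
  refine ⟨{x | x ∈ p.support}, fun x hx => ?_, p.start_mem_support, p.end_mem_support,
    p.connected_induce_support.preconnected _ _⟩
  calc G.dist r x ≤ (p.takeUntil x hx).length := dist_le _
    _ ≤ p.length := p.length_takeUntil_le_length hx
    _ = G.dist r v := hp
    _ ≤ n := hv

lemma SimpleGraph.Connected.isApexSet_dist_le_dist_eq (hG : G.Connected) (r : V) (n : ℕ) :
    IsApexSet G {u | G.dist r u ≤ n} {v | G.dist r v = n + 1} where
  connected := hG.connected_induce_dist_le r n
  disjoint := Set.disjoint_left.mpr fun x (hx : G.dist r x ≤ n) (hx' : G.dist r x = n + 1) => by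
    omega
  exists_adj _ hx :=
    let ⟨u, hux, hu⟩ := hG.exists_adj_dist_eq hx
    ⟨u, hu.le, hux⟩

end Layers

theorem layers_are_linear_forests_general {V : Type*} (G : SimpleGraph V)
    (hG : G.Connected) (hop : Outerplanar G)
    (r : V) (i : ℕ) :
    (G.induce {v | G.dist r v = i}).IsAcyclic ∧
    ∀ v, ((G.induce {v | G.dist r v = i}).neighborSet v).ncard ≤ 2 := by
  cases i with
  | zero =>
    have hS : {v | G.dist r v = (0 : ℕ)} = {r} := by
      ext v
      simp [hG.dist_eq_zero_iff, eq_comm]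
    rw [hS]
    exact ⟨IsAcyclic.of_subsingleton, fun v => by simp⟩
  | succ n =>
    have hB := hG.isApexSet_dist_le_dist_eq r n
    exact ⟨hB.isAcyclic_induce hop.1, hB.ncard_neighborSet_induce_le_two hop.2⟩

/-- For a maximal outerplanar graph `G` with BFS-layering `(V_0, V_1, …)` rooted at `r`,
each layer induces a linear forest: a forest of maximum degree at most 2. -/
theorem layers_are_linear_forests {V : Type*} [Fintype V] (G : SimpleGraph V)
    (hG : G.Connected) (hop : Outerplanar G)
    (hmax : ∀ u v : V, u ≠ v → ¬ G.Adj u v →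
      ¬ Outerplanar (G ⊔ SimpleGraph.fromEdgeSet {s(u, v)}))
    (r : V) (i : ℕ) :
    (G.induce {v | G.dist r v = i}).IsAcyclic ∧
    ∀ v, ((G.induce {v | G.dist r v = i}).neighborSet v).ncard ≤ 2 :=
  layers_are_linear_forests_general G hG hop r i
end

section
/- Let G be a graph and let 𝒫 be a partition of V(G) of layered width ℓ with respect to a layering (V_0, V_1, …), such that the quotient graph G/𝒫 has a p-centered coloring with c colors. Then G has a p-centered coloring with at most ℓ·(p+1)·c colors. -/
/-!
Color `v` by the triple (ψ of its part, its layer mod `p + 1`, its rank among the at most `ℓ`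
vertices sharing its part and layer). Let `H` be a connected subgraph on which at most `p`
colors occur. Layers change by at most one along edges, so the layers met by `H` form an
interval; it has fewer than `p + 1` elements, since otherwise every residue would occur, so on `H`
a layer is determined by its residue. The parts met by `H` induce a connected subgraph of the
quotient with at most `p` ψ-colors, so one of them, `A`, has a ψ-color unique there. A vertex `u`
of `H` in `A` then has a unique color in `H`: a vertex of `H` with the same color lies in the
same part and the same layer and has the same rank.
-/

/-- A vertex coloring `φ` of a graph `G` is `p`-centered if for every connected subgraph `H`
of `G`, either `φ` uses more than `p` colors on `H` or some color appears exactly once on `H`. -/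
def IsPCentered {V C : Type*} (G : SimpleGraph V) (p : ℕ) (φ : V → C) : Prop :=
  ∀ H : G.Subgraph, H.Connected →
    p < (φ '' H.verts).ncard ∨ ∃ c : C, {v ∈ H.verts | φ v = c}.ncard = 1

section

open Function Set

variable {V W : Type*}

theorem exists_injective_prodMk_of_ncard_fiber_le [Finite V] {β : Type*} (f : V → β) {ℓ : ℕ}
    (h : ∀ b, {v | f v = b}.ncard ≤ ℓ) : ∃ r : V → Fin ℓ, Injective fun v => (f v, r v) := by
  classical
  have : Fintype V := Fintype.ofFinite V
  have hemb b : Nonempty ({v // f v = b} ↪ Fin ℓ) :=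
    Function.Embedding.nonempty_of_card_le <| by
      rw [Fintype.card_fin, ← Nat.card_eq_fintype_card]
      exact (Nat.card_coe_set_eq {v | f v = b}).trans_le (h b)
  let emb b := (hemb b).some
  have hval : ∀ {v b} (hv : f v = b), emb b ⟨v, hv⟩ = emb (f v) ⟨v, rfl⟩ := by
    rintro v _ rfl
    rfl
  refine ⟨fun v => emb (f v) ⟨v, rfl⟩, fun u v huv => ?_⟩
  obtain ⟨hf, hr⟩ := Prod.mk.inj huv
  dsimp only at hr
  rw [← hval hf] at hr
  exact congrArg Subtype.val ((emb (f v)).injective hr)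

namespace SimpleGraph

variable {G : SimpleGraph V}

theorem Reachable.map_of_eq_or_adj {G' : SimpleGraph W} {f : V → W}
    (hf : ∀ ⦃u v⦄, G.Adj u v → f u = f v ∨ G'.Adj (f u) (f v)) {u v : V}
    (h : G.Reachable u v) : G'.Reachable (f u) (f v) := by
  rw [reachable_iff_reflTransGen] at h ⊢
  refine h.lift' f fun a b hab => ?_
  rcases hf hab with heq | hadj
  · show Relation.ReflTransGen G'.Adj (f a) (f b)
    rw [heq]
  · exact .single hadj

theorem Reachable.exists_eq_of_le_of_le {L : V → ℕ} (hL : ∀ ⦃u v⦄, G.Adj u v → L v ≤ L u + 1)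
    {x y : V} (h : G.Reachable x y) {i : ℕ} (hx : L x ≤ i) (hy : i ≤ L y) : ∃ z, L z = i := by
  obtain ⟨w⟩ := h
  induction w with
  | nil => exact ⟨_, le_antisymm hx hy⟩
  | @cons a b _ hab _ ih =>
    by_cases hb : L b ≤ i
    · exact ih hb hy
    · exact ⟨a, by have := hL hab; omega⟩

namespace Subgraph

variable {H : G.Subgraph} {L : V → ℕ}

theorem Connected.exists_mem_verts_eq (hH : H.Connected)
    (hL : ∀ ⦃u v⦄, G.Adj u v → L v ≤ L u + 1) {x y : V} (hx : x ∈ H.verts) (hy : y ∈ H.verts)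
    {i : ℕ} (hxi : L x ≤ i) (hiy : i ≤ L y) : ∃ z ∈ H.verts, L z = i := by
  obtain ⟨⟨z, hz⟩, rfl⟩ := (hH.preconnected.coe ⟨x, hx⟩ ⟨y, hy⟩).exists_eq_of_le_of_le
    (L := L ∘ (↑)) (fun _ _ huv => hL (H.adj_sub huv)) hxi hiy
  exact ⟨z, hz, rfl⟩

theorem Connected.natCast_image_eq_univ (hH : H.Connected)
    (hL : ∀ ⦃u v⦄, G.Adj u v → L v ≤ L u + 1) {n : ℕ} [NeZero n] {u v : V}
    (hu : u ∈ H.verts) (hv : v ∈ H.verts) (huv : L u + n ≤ L v) :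
    (fun w => (L w : ZMod n)) '' H.verts = univ := by
  refine eq_univ_of_forall fun k => ?_
  have hk := (k - L u).val_lt
  obtain ⟨z, hz, hLz⟩ := hH.exists_mem_verts_eq hL hu hv (i := L u + (k - L u).val)
    (by omega) (by omega)
  exact ⟨z, hz, by simp [hLz]⟩

theorem Connected.eq_of_natCast_eq (hH : H.Connected)
    (hL : ∀ ⦃u v⦄, G.Adj u v → L v ≤ L u + 1) {n : ℕ} [NeZero n]
    (hres : ((fun w => (L w : ZMod n)) '' H.verts).ncard < n) {u v : V}
    (hu : u ∈ H.verts) (hv : v ∈ H.verts) (huv : (L u : ZMod n) = L v) : L u = L v := by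
  wlog hle : L u ≤ L v generalizing u v
  · exact (this hv hu huv.symm (by omega)).symm
  by_contra hne
  have hdvd : n ∣ L v - L u :=
    (Nat.modEq_iff_dvd' hle).mp ((ZMod.natCast_eq_natCast_iff _ _ _).mp huv)
  have hfar : L u + n ≤ L v := by
    have := Nat.le_of_dvd (by omega) hdvd
    omega
  rw [hH.natCast_image_eq_univ hL hu hv hfar, ncard_univ, Nat.card_zmod] at hres
  exact lt_irrefl n hres

theorem Connected.induce_image {Q : SimpleGraph W} (hH : H.Connected) {P : V → W}
    (hP : ∀ ⦃u v⦄, G.Adj u v → P u ≠ P v → Q.Adj (P u) (P v)) :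
    ((⊤ : Q.Subgraph).induce (P '' H.verts)).Connected := by
  rw [Subgraph.connected_iff, Subgraph.preconnected_iff]
  refine ⟨?_, hH.nonempty.image P⟩
  rintro ⟨_, x, hx, rfl⟩ ⟨_, y, hy, rfl⟩
  refine (hH.preconnected.coe ⟨x, hx⟩ ⟨y, hy⟩).map_of_eq_or_adj
    (f := fun z : H.verts => (⟨P z, mem_image_of_mem P z.2⟩ : P '' H.verts)) fun a b hab => ?_
  by_cases h : P a = P b
  · exact .inl (Subtype.ext h)
  · exact .inr ⟨mem_image_of_mem P a.2, mem_image_of_mem P b.2, hP (H.adj_sub hab) h⟩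

end Subgraph

end SimpleGraph

section IsPCentered

variable {ι C D : Type*} {G : SimpleGraph V} {p : ℕ}

theorem IsPCentered.comp_injective {φ : V → C} (h : IsPCentered G p φ) {e : C → D}
    (he : Injective e) : IsPCentered G p (e ∘ φ) := by
  intro H hH
  refine (h H hH).imp (fun hmany => ?_) fun ⟨c, hc⟩ => ⟨e c, ?_⟩
  · rwa [image_comp, ncard_image_of_injective _ he]
  · simpa only [comp_apply, he.eq_iff] using hc

theorem IsPCentered.of_quotient [Finite V] {Q : SimpleGraph ι} {ψ : ι → C}
    (hψ : IsPCentered Q p ψ) {P : V → ι} {L : V → ℕ}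
    (hL : ∀ ⦃u v⦄, G.Adj u v → L v ≤ L u + 1)
    (hP : ∀ ⦃u v⦄, G.Adj u v → P u ≠ P v → Q.Adj (P u) (P v))
    {r : V → D} (hr : Injective fun v => ((P v, L v), r v)) :
    IsPCentered G p fun v => (ψ (P v), (L v : ZMod (p + 1)), r v) := by
  intro H hH
  set φ := fun v => (ψ (P v), (L v : ZMod (p + 1)), r v)
  refine or_iff_not_imp_left.2 fun hmany => ?_
  have hfew : (φ '' H.verts).ncard ≤ p := not_lt.mp hmany
  have hres : ((fun w => (L w : ZMod (p + 1))) '' H.verts).ncard < p + 1 := by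
    have := ncard_image_le (f := fun x => x.2.1) (toFinite (φ '' H.verts))
    rw [image_image] at this
    exact Nat.lt_succ_of_le (this.trans hfew)
  have hψfew : (ψ '' (P '' H.verts)).ncard ≤ p := by
    have := ncard_image_le (f := Prod.fst) (toFinite (φ '' H.verts))
    rw [image_image] at this
    rw [image_image]
    exact this.trans hfew
  obtain ⟨c, hc⟩ := (hψ _ (hH.induce_image hP)).resolve_left hψfew.not_gt
  obtain ⟨A, hA⟩ := ncard_eq_one.mp hc
  obtain ⟨⟨u, hu, rfl⟩, hψu⟩ := hA.symm.subset (mem_singleton A)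
  refine ⟨φ u, ncard_eq_one.mpr ⟨u, Set.ext fun v => ⟨fun ⟨hv, hφ⟩ => ?_, ?_⟩⟩⟩
  · obtain ⟨hψv, hmod, hrv⟩ : ψ (P v) = ψ (P u) ∧ (L v : ZMod (p + 1)) = L u ∧ r v = r u := by
      simpa [φ] using hφ
    have hPv : P v = P u := hA.subset ⟨mem_image_of_mem P hv, hψv.trans hψu⟩
    have hLv : L v = L u := hH.eq_of_natCast_eq hL hres hv hu hmod
    exact hr (by simp only [hPv, hLv, hrv])
  · rintro rfl
    exact ⟨hu, rfl⟩

end IsPCentered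

end

theorem pCentered_of_quotient_general {V ι : Type*} [Fintype V]
    (G : SimpleGraph V) (p ℓ c : ℕ)
    (P : V → ι) (L : V → ℕ)
    (hL : ∀ ⦃u v : V⦄, G.Adj u v → L u ≤ L v + 1 ∧ L v ≤ L u + 1)
    (hwidth : ∀ (a : ι) (i : ℕ), {v : V | P v = a ∧ L v = i}.ncard ≤ ℓ)
    (Q : SimpleGraph ι)
    (hQ : ∀ a b : ι, Q.Adj a b ↔ a ≠ b ∧ ∃ u v : V, P u = a ∧ P v = b ∧ G.Adj u v)
    (ψ : ι → Fin c) (hψ : IsPCentered Q p ψ) :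
    ∃ φ : V → Fin (ℓ * (p + 1) * c), IsPCentered G p φ := by
  obtain ⟨r, hr⟩ := exists_injective_prodMk_of_ncard_fiber_le (fun v => (P v, L v)) (ℓ := ℓ)
    fun ⟨a, i⟩ => by simpa only [Prod.mk.injEq] using hwidth a i
  have hφ := hψ.of_quotient (fun _ _ huv => (hL huv).2)
    (fun u v huv hne => (hQ _ _).2 ⟨hne, u, v, rfl, rfl, huv⟩) hr
  let e : Fin c × ZMod (p + 1) × Fin ℓ ≃ Fin (ℓ * (p + 1) * c) :=
    Fintype.equivFinOfCardEq (by simp only [Fintype.card_prod, Fintype.card_fin, ZMod.card]; ring)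
  exact ⟨e ∘ _, hφ.comp_injective e.injective⟩

/-- Let `𝒫` (given by the part map `P : V → ι`) be a partition of `V(G)` of layered width `ℓ`
with respect to a layering `L` (every edge joins vertices in the same or consecutive layers,
and each part meets each layer in at most `ℓ` vertices). If the quotient graph `Q`
(distinct parts adjacent iff joined by an edge of `G`) has a `p`-centered coloring with `c`
colors, then `G` has a `p`-centered coloring with at most `ℓ·(p+1)·c` colors. -/
theorem pCentered_of_quotient {V ι : Type*} [Fintype V] [Fintype ι]
    (G : SimpleGraph V) (p ℓ c : ℕ)
    (P : V → ι) (L : V → ℕ)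
    (hL : ∀ ⦃u v : V⦄, G.Adj u v → L u ≤ L v + 1 ∧ L v ≤ L u + 1)
    (hwidth : ∀ (a : ι) (i : ℕ), {v : V | P v = a ∧ L v = i}.ncard ≤ ℓ)
    (Q : SimpleGraph ι)
    (hQ : ∀ a b : ι, Q.Adj a b ↔ a ≠ b ∧ ∃ u v : V, P u = a ∧ P v = b ∧ G.Adj u v)
    (ψ : ι → Fin c) (hψ : IsPCentered Q p ψ) :
    ∃ φ : V → Fin (ℓ * (p + 1) * c), IsPCentered G p φ :=
  pCentered_of_quotient_general G p ℓ c P L hL hwidth Q hQ ψ hψ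
end

section
/- If G⁺ is obtained from a graph G by adding a universal vertex (a new vertex adjacent to all vertices of G), then stw(G⁺) = stw(G) + 1, where stw denotes simple treewidth. In particular, adding an apex vertex increases the treewidth of a graph by exactly one: tw(G⁺) = tw(G) + 1. -/
/-! Adding the apex to every bag turns a decomposition of `G` of width `k` into one of `G⁺` of
width `k + 1`, and simplicity survives because a `(k + 1)`-set lying in three bags contains a
`k`-set of vertices of `G` lying in the same three bags. Conversely, the bags of a decomposition
of `G⁺` that contain the apex form a subtree; deleting the apex from them gives a decomposition
of `G`, which still covers each edge `uv` by the Helly property of subtrees, applied to the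
subtrees of `u`, `v` and the apex. Since `G⁺` has an edge, its width is positive, so both minima
shift by exactly one. -/

/-- A tree-decomposition of a graph `G`: a tree together with bags indexed by its nodes,
covering all vertices and edges, such that the set of nodes whose bag contains any given
vertex induces a (nonempty, by `vert_cover`) subtree. -/
structure TreeDecomp {V : Type} (G : SimpleGraph V) where
  ι : Type
  tree : SimpleGraph ι
  tree_connected : tree.Connected
  tree_acyclic : tree.IsAcyclic
  bag : ι → Set V
  vert_cover : ∀ v : V, ∃ t : ι, v ∈ bag t
  edge_cover : ∀ ⦃u v : V⦄, G.Adj u v → ∃ t : ι, u ∈ bag t ∧ v ∈ bag t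
  bag_subtree : ∀ v : V, (tree.induce {t : ι | v ∈ bag t}).Preconnected

/-- `G` has a tree-decomposition of width at most `k` (all bags of size at most `k+1`). -/
def HasTreewidthLE {V : Type} (G : SimpleGraph V) (k : ℕ) : Prop :=
  ∃ D : TreeDecomp G, ∀ t, (D.bag t).ncard ≤ k + 1

/-- `G` has a `k`-simple tree-decomposition: width at most `k`, and every set of exactly
`k` vertices is contained in at most two distinct bags. -/
def HasSimpleTreewidthLE {V : Type} (G : SimpleGraph V) (k : ℕ) : Prop :=
  ∃ D : TreeDecomp G, (∀ t, (D.bag t).ncard ≤ k + 1) ∧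
    ∀ X : Set V, X.ncard = k →
      ∀ t₁ t₂ t₃ : D.ι, X ⊆ D.bag t₁ → X ⊆ D.bag t₂ → X ⊆ D.bag t₃ →
        t₁ = t₂ ∨ t₁ = t₃ ∨ t₂ = t₃

/-- The treewidth of `G`. -/
noncomputable def treewidth {V : Type} (G : SimpleGraph V) : ℕ :=
  sInf {k | HasTreewidthLE G k}

/-- The simple treewidth of `G`. -/
noncomputable def simpleTreewidth {V : Type} (G : SimpleGraph V) : ℕ :=
  sInf {k | HasSimpleTreewidthLE G k}

/-- The graph obtained from `G` by adding a new universal (apex) vertex, adjacent to all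
vertices of `G`. -/
def addUniversal {V : Type} (G : SimpleGraph V) : SimpleGraph (Option V) :=
  SimpleGraph.fromRel (fun x y =>
    x = none ∨ ∃ u v : V, x = some u ∧ y = some v ∧ G.Adj u v)


open SimpleGraph Set

namespace SimpleGraph

variable {α : Type*} {G : SimpleGraph α} {s t u : Set α}

lemma Preconnected.exists_isPath_of_induce (hs : (G.induce s).Preconnected) {a b : α}
    (ha : a ∈ s) (hb : b ∈ s) : ∃ p : G.Walk a b, p.IsPath ∧ ∀ x ∈ p.support, x ∈ s := by
  classical
  obtain ⟨w⟩ := hs ⟨a, ha⟩ ⟨b, hb⟩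
  let w' : G.Walk a b := w.map (Embedding.induce s).toHom
  refine ⟨w'.bypass, w'.bypass_isPath, fun x hx => ?_⟩
  obtain ⟨y, -, rfl⟩ := List.mem_map.mp (w.support_map _ ▸ w'.support_bypass_subset_support hx)
  exact y.2

lemma IsAcyclic.eq_of_isPath (hG : G.IsAcyclic) {a b : α} {p q : G.Walk a b} (hp : p.IsPath)
    (hq : q.IsPath) : p = q :=
  Subtype.mk.inj <| (hG.subsingleton_path a b).elim ⟨p, hp⟩ ⟨q, hq⟩

lemma IsAcyclic.support_subset_of_preconnected_induce (hG : G.IsAcyclic)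
    (hs : (G.induce s).Preconnected) {a b : α} {p : G.Walk a b} (hp : p.IsPath)
    (ha : a ∈ s) (hb : b ∈ s) : ∀ x ∈ p.support, x ∈ s := by
  obtain ⟨q, hq, hqs⟩ := hs.exists_isPath_of_induce ha hb
  obtain rfl := hG.eq_of_isPath hp hq
  exact hqs

lemma IsAcyclic.preconnected_induce_inter (hG : G.IsAcyclic) (hs : (G.induce s).Preconnected)
    (ht : (G.induce t).Preconnected) : (G.induce (s ∩ t)).Preconnected := by
  rintro ⟨a, has, hat⟩ ⟨b, hbs, hbt⟩
  obtain ⟨p, hp, hps⟩ := hs.exists_isPath_of_induce has hbs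
  have hpt := hG.support_subset_of_preconnected_induce ht hp hat hbt
  exact (p.induce (s ∩ t) fun x hx => ⟨hps x hx, hpt x hx⟩).reachable

/-- If the edge `xy` crossed from `s \ t` to `t \ s`, then the path from `x` to a point of
`s ∩ t` inside `s` and the path from `y` to it inside `t` would close a cycle with `xy`. -/
lemma IsAcyclic.mem_or_mem_of_adj (hG : G.IsAcyclic) (hs : (G.induce s).Preconnected)
    (ht : (G.induce t).Preconnected) {a x y : α} (ha : a ∈ s ∩ t) (hx : x ∈ s) (hy : y ∈ t)
    (hxy : G.Adj x y) : x ∈ t ∨ y ∈ s := by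
  obtain ⟨p, hp, hps⟩ := hs.exists_isPath_of_induce hx ha.1
  obtain ⟨q, hq, hqt⟩ := ht.exists_isPath_of_induce hy ha.2
  by_cases hxq : x ∈ q.support
  · exact .inl (hqt x hxq)
  · obtain rfl := hG.eq_of_isPath hp (hq.cons hxq : (q.cons hxy).IsPath)
    exact .inr (hps y (by simp))

lemma IsAcyclic.exists_mem_inter_of_walk (hG : G.IsAcyclic) (hs : (G.induce s).Preconnected)
    (ht : (G.induce t).Preconnected) (hst : (s ∩ t).Nonempty) {b c : α} (w : G.Walk b c)
    (hw : ∀ x ∈ w.support, x ∈ s ∪ t) (hb : b ∈ s) (hc : c ∈ t) :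
    ∃ x ∈ w.support, x ∈ s ∩ t := by
  induction w with
  | nil => exact ⟨_, by simp, hb, hc⟩
  | @cons b d c hbd w ih =>
    by_cases hbt : b ∈ t
    · exact ⟨b, by simp, hb, hbt⟩
    by_cases hds : d ∈ s
    · obtain ⟨x, hx, hxst⟩ := ih (fun x hx => hw x (by simp [hx])) hds hc
      exact ⟨x, by simp [hx], hxst⟩
    have hdt : d ∈ t := (hw d (by simp)).resolve_left hds
    obtain ⟨a, ha⟩ := hst
    exact absurd ((hG.mem_or_mem_of_adj hs ht ha hb hdt hbd).resolve_left hbt) hds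

theorem IsAcyclic.inter_inter_nonempty (hG : G.IsAcyclic) (hs : (G.induce s).Preconnected)
    (ht : (G.induce t).Preconnected) (hu : (G.induce u).Preconnected)
    (hst : (s ∩ t).Nonempty) (hsu : (s ∩ u).Nonempty) (htu : (t ∩ u).Nonempty) :
    (s ∩ t ∩ u).Nonempty := by
  classical
  obtain ⟨a, has, hat⟩ := hst
  obtain ⟨b, hbs, hbu⟩ := hsu
  obtain ⟨c, hct, hcu⟩ := htu
  obtain ⟨p, -, hps⟩ := hs.exists_isPath_of_induce hbs has
  obtain ⟨q, -, hqt⟩ := ht.exists_isPath_of_induce hat hct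
  let w := (p.append q).bypass
  have hw : ∀ x ∈ w.support, x ∈ s ∪ t := fun x hx => by
    rcases (p.mem_support_append_iff q).mp ((p.append q).support_bypass_subset_support hx)
      with h | h
    exacts [.inl (hps x h), .inr (hqt x h)]
  have hwu := hG.support_subset_of_preconnected_induce hu (p.append q).bypass_isPath hbu hcu
  obtain ⟨x, hx, hxst⟩ := hG.exists_mem_inter_of_walk hs ht ⟨a, has, hat⟩ w hw hbs hct
  exact ⟨x, hxst, hwu x hx⟩

lemma Preconnected.induce_induce_of_inter (h : (G.induce (s ∩ t)).Preconnected) :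
    ((G.induce s).induce {x : s | ↑x ∈ t}).Preconnected :=
  h.map ⟨fun x => ⟨⟨x.1, x.2.1⟩, x.2.2⟩, id⟩ fun y => ⟨⟨y.1.1, y.1.2, y.2⟩, rfl⟩

end SimpleGraph

namespace Set

variable {V : Type*}

lemma subset_insert_none_image_preimage_some (X : Set (Option V)) :
    X ⊆ insert none (some '' (some ⁻¹' X)) := by
  rintro (_ | v) hv <;> simp [hv]

@[simp]
lemma preimage_some_insert_none_image_some (s : Set V) : some ⁻¹' insert none (some '' s) = s := by
  ext; simp

variable [Finite V]

lemma ncard_insert_none_image_some (s : Set V) :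
    (insert none (some '' s)).ncard = s.ncard + 1 := by
  rw [ncard_insert_of_notMem (by simp) (toFinite _),
    ncard_image_of_injective _ (Option.some_injective V)]

lemma ncard_preimage_some_add_one {X : Set (Option V)} (h : none ∈ X) :
    (some ⁻¹' X).ncard + 1 = X.ncard := by
  rw [← ncard_insert_none_image_some]
  congr 1
  refine (X.subset_insert_none_image_preimage_some.antisymm ?_).symm
  rintro _ (rfl | ⟨v, hv, rfl⟩)
  exacts [h, hv]

lemma ncard_le_ncard_preimage_some_add_one (X : Set (Option V)) :
    X.ncard ≤ (some ⁻¹' X).ncard + 1 :=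
  ncard_insert_none_image_some (some ⁻¹' X) ▸
    ncard_le_ncard X.subset_insert_none_image_preimage_some (toFinite _)

end Set

section addUniversal

variable {V : Type} {G : SimpleGraph V}

@[simp]
lemma addUniversal_adj_none_some (v : V) : (addUniversal G).Adj none (some v) := by
  simp [addUniversal]

@[simp]
lemma addUniversal_adj_some_none (v : V) : (addUniversal G).Adj (some v) none :=
  (addUniversal_adj_none_some v).symm

@[simp]
lemma addUniversal_adj_some_some {u v : V} :
    (addUniversal G).Adj (some u) (some v) ↔ G.Adj u v := by
  simp only [addUniversal, fromRel_adj, ne_eq, Option.some.injEq, reduceCtorEq, exists_and_left,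
    exists_eq_left', false_or]
  exact ⟨fun h => h.2.elim id .symm, fun h => ⟨h.ne, .inl h⟩⟩

namespace TreeDecomp

def singleBag (G : SimpleGraph V) : TreeDecomp G where
  ι := Unit
  tree := ⊥
  tree_connected := .of_subsingleton
  tree_acyclic := isAcyclic_bot
  bag _ := univ
  vert_cover v := ⟨(), mem_univ v⟩
  edge_cover u v _ := ⟨(), mem_univ u, mem_univ v⟩
  bag_subtree _ := .of_subsingleton

def insertUniversal (D : TreeDecomp G) : TreeDecomp (addUniversal G) where
  ι := D.ι
  tree := D.tree
  tree_connected := D.tree_connected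
  tree_acyclic := D.tree_acyclic
  bag t := insert none (some '' D.bag t)
  vert_cover
    | none => ⟨D.tree_connected.nonempty.some, mem_insert _ _⟩
    | some v => (D.vert_cover v).imp fun _ hv => by simpa using hv
  edge_cover := by
    rintro (_ | u) (_ | v) huv
    · exact (huv.ne rfl).elim
    · obtain ⟨t, ht⟩ := D.vert_cover v
      exact ⟨t, by simpa using ht⟩
    · obtain ⟨t, ht⟩ := D.vert_cover u
      exact ⟨t, by simpa using ht⟩
    · obtain ⟨t, ht⟩ := D.edge_cover (addUniversal_adj_some_some.mp huv)
      exact ⟨t, by simpa using ht⟩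
  bag_subtree
    | none => by
      have hall : {t | none ∈ insert none (some '' D.bag t)} = univ := by simp
      exact hall ▸ (induceUnivIso D.tree).preconnected_iff.mpr D.tree_connected.preconnected
    | some v => by
      have hv : {t | some v ∈ insert none (some '' D.bag t)} = {t | v ∈ D.bag t} := by simp
      exact hv ▸ D.bag_subtree v

@[simp]
lemma insertUniversal_bag (D : TreeDecomp G) (t : D.ι) :
    D.insertUniversal.bag t = insert none (some '' D.bag t) :=
  rfl

def eraseUniversal (D : TreeDecomp (_root_.addUniversal G)) : TreeDecomp G where
  ι := {t : D.ι // none ∈ D.bag t}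
  tree := D.tree.induce {t | none ∈ D.bag t}
  tree_connected :=
    have := nonempty_subtype.mpr (D.vert_cover none)
    ⟨D.bag_subtree none⟩
  tree_acyclic := D.tree_acyclic.induce _
  bag t := some ⁻¹' D.bag t
  vert_cover v :=
    have ⟨t, ht⟩ := D.edge_cover (addUniversal_adj_none_some v)
    ⟨⟨t, ht.1⟩, ht.2⟩
  edge_cover u v huv := by
    obtain ⟨t, ⟨hu, hv⟩, h⟩ := D.tree_acyclic.inter_inter_nonempty (D.bag_subtree (some u))
      (D.bag_subtree (some v)) (D.bag_subtree none)
      (D.edge_cover (addUniversal_adj_some_some.mpr huv))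
      (D.edge_cover (addUniversal_adj_some_none u))
      (D.edge_cover (addUniversal_adj_some_none v))
    exact ⟨⟨t, h⟩, hu, hv⟩
  bag_subtree v :=
    (D.tree_acyclic.preconnected_induce_inter (D.bag_subtree none)
      (D.bag_subtree (some v))).induce_induce_of_inter

def IsSimple (D : TreeDecomp G) (k : ℕ) : Prop :=
  ∀ X : Set V, X.ncard = k → ∀ t₁ t₂ t₃ : D.ι, X ⊆ D.bag t₁ → X ⊆ D.bag t₂ → X ⊆ D.bag t₃ →
    t₁ = t₂ ∨ t₁ = t₃ ∨ t₂ = t₃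

variable [Finite V] {k : ℕ}

lemma ncard_bag_insertUniversal_le {D : TreeDecomp G} (hD : ∀ t, (D.bag t).ncard ≤ k + 1)
    (t : D.ι) : (D.insertUniversal.bag t).ncard ≤ k + 2 :=
  (ncard_insert_none_image_some _).trans_le (Nat.add_le_add_right (hD t) 1)

lemma ncard_bag_eraseUniversal_le {D : TreeDecomp (_root_.addUniversal G)}
    (hD : ∀ t, (D.bag t).ncard ≤ k + 2) (t : D.eraseUniversal.ι) :
    (D.eraseUniversal.bag t).ncard ≤ k + 1 := by
  have hsucc : (D.eraseUniversal.bag t).ncard + 1 = (D.bag t.1).ncard :=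
    ncard_preimage_some_add_one t.2
  have := hD t.1
  omega

lemma IsSimple.insertUniversal {D : TreeDecomp G} (hD : D.IsSimple k) :
    D.insertUniversal.IsSimple (k + 1) := by
  intro X hX t₁ t₂ t₃ h₁ h₂ h₃
  have hbag {t : D.ι} (h : X ⊆ D.insertUniversal.bag t) : some ⁻¹' X ⊆ D.bag t := by
    simpa using preimage_mono (f := some) h
  obtain ⟨Z, hZ, hZk⟩ := exists_subset_card_eq (s := some ⁻¹' X) (n := k)
    (by have := X.ncard_le_ncard_preimage_some_add_one; omega)
  exact hD Z hZk t₁ t₂ t₃ (hZ.trans (hbag h₁)) (hZ.trans (hbag h₂)) (hZ.trans (hbag h₃))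

lemma IsSimple.eraseUniversal {D : TreeDecomp (_root_.addUniversal G)} (hD : D.IsSimple (k + 1)) :
    D.eraseUniversal.IsSimple k := by
  intro X hX t₁ t₂ t₃ h₁ h₂ h₃
  have hbag {t : D.eraseUniversal.ι} (h : X ⊆ D.eraseUniversal.bag t) :
      insert none (some '' X) ⊆ D.bag t.1 :=
    insert_subset t.2 (image_subset_iff.mpr h)
  have hcard : (insert none (some '' X)).ncard = k + 1 := by
    rw [ncard_insert_none_image_some, hX]
  obtain h | h | h := hD _ hcard t₁.1 t₂.1 t₃.1 (hbag h₁) (hbag h₂) (hbag h₃)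
  exacts [.inl (Subtype.ext h), .inr (.inl (Subtype.ext h)), .inr (.inr (Subtype.ext h))]

end TreeDecomp

variable {k : ℕ}

lemma HasSimpleTreewidthLE.hasTreewidthLE (h : HasSimpleTreewidthLE G k) : HasTreewidthLE G k :=
  h.imp fun _ hD => hD.1

lemma hasSimpleTreewidthLE_natCard (G : SimpleGraph V) : HasSimpleTreewidthLE G (Nat.card V) :=
  ⟨TreeDecomp.singleBag G, fun _ => by simp [TreeDecomp.singleBag], fun _ _ _ _ _ _ _ _ => .inl rfl⟩

variable [Finite V]

lemma hasTreewidthLE_addUniversal_add_one_iff :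
    HasTreewidthLE (addUniversal G) (k + 1) ↔ HasTreewidthLE G k :=
  ⟨fun ⟨D, hD⟩ => ⟨D.eraseUniversal, TreeDecomp.ncard_bag_eraseUniversal_le hD⟩,
    fun ⟨D, hD⟩ => ⟨D.insertUniversal, TreeDecomp.ncard_bag_insertUniversal_le hD⟩⟩

lemma hasSimpleTreewidthLE_addUniversal_add_one_iff :
    HasSimpleTreewidthLE (addUniversal G) (k + 1) ↔ HasSimpleTreewidthLE G k :=
  ⟨fun ⟨D, hDw, hDs⟩ => ⟨D.eraseUniversal, TreeDecomp.ncard_bag_eraseUniversal_le hDw,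
      TreeDecomp.IsSimple.eraseUniversal hDs⟩,
    fun ⟨D, hDw, hDs⟩ => ⟨D.insertUniversal, TreeDecomp.ncard_bag_insertUniversal_le hDw,
      TreeDecomp.IsSimple.insertUniversal hDs⟩⟩

lemma not_hasTreewidthLE_addUniversal_zero [Nonempty V] : ¬ HasTreewidthLE (addUniversal G) 0 := by
  rintro ⟨D, hD⟩
  obtain ⟨v⟩ := ‹Nonempty V›
  obtain ⟨t, hnone, hv⟩ := D.edge_cover (addUniversal_adj_none_some v)
  have := ncard_le_ncard (pair_subset hnone hv) (toFinite _)
  rw [ncard_pair (Option.some_ne_none v).symm] at this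
  have := hD t
  omega

end addUniversal

lemma sInf_setOf_eq_sInf_add_one {P Q : ℕ → Prop} (hP : ∃ k, P k) (hQ : ∀ k, Q (k + 1) ↔ P k)
    (hQ₀ : ¬ Q 0) : sInf {k | Q k} = sInf {k | P k} + 1 := by
  have hpos : 1 ≤ sInf {k | Q k} := by
    rw [Nat.one_le_iff_ne_zero, Ne, Nat.sInf_eq_zero, not_or]
    obtain ⟨k, hk⟩ := hP
    exact ⟨hQ₀, Set.nonempty_iff_ne_empty.mp ⟨k + 1, (hQ k).mpr hk⟩⟩
  rw [← Nat.sInf_add hpos]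
  simp only [hQ]

/-- Adding a universal (apex) vertex increases simple treewidth by exactly one, and likewise
increases treewidth by exactly one. -/
theorem addUniversal_treewidths {V : Type} [Fintype V] [Nonempty V] (G : SimpleGraph V) :
    simpleTreewidth (addUniversal G) = simpleTreewidth G + 1 ∧
    treewidth (addUniversal G) = treewidth G + 1 := by
  have hzero : ¬ HasTreewidthLE (addUniversal G) 0 := not_hasTreewidthLE_addUniversal_zero
  exact ⟨sInf_setOf_eq_sInf_add_one ⟨_, hasSimpleTreewidthLE_natCard G⟩
      (fun _ => hasSimpleTreewidthLE_addUniversal_add_one_iff) fun h => hzero h.hasTreewidthLE,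
    sInf_setOf_eq_sInf_add_one ⟨_, (hasSimpleTreewidthLE_natCard G).hasTreewidthLE⟩
      (fun _ => hasTreewidthLE_addUniversal_add_one_iff) hzero⟩
end
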